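/- arXiv:2012.02183 — 9 statements merged into one kernel-verified Lean document; each statement's English description precedes it below -/
import Mathlib

section
/- Let q ≥ 3 and n ≥ 2. If a pair (T⁺, T⁻) of disjoint subsets of V(H(n,q)) satisfies the weight definition of extended perfect bitrade (Definition 3), then both T⁺ and T⁻ are codes with code distance at least 4. -/
/-! Two codewords at distance 1 give weight at least 2 at either of them. At distance 2 or 3
some vertex `z` (one of the two words, or a word between them) sees one codeword at distance
at most 1 and the other at distance 2, so its weight is at least `1 + 2/n > 1`. -/

open Finset

/-- Vertex set of the Hamming graph `H(n,q)`: `q`-ary words of length `n`. -/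
abbrev HV (n q : ℕ) : Type := Fin n → ZMod q

/-- The radius-`r` sphere around `x` in `H(n,q)`. -/
def hSphere {n q : ℕ} (x : HV n q) (r : ℕ) : Set (HV n q) := {y | hammingDist x y = r}

/-- The radius-1 ball around `x` in `H(n,q)`. -/
def hBall {n q : ℕ} (x : HV n q) : Set (HV n q) := {z | hammingDist x z ≤ 1}

/-- A code `C` has code distance at least `d`. -/
def minDistGe {n q : ℕ} (C : Set (HV n q)) (d : ℕ) : Prop :=
  ∀ x ∈ C, ∀ y ∈ C, x ≠ y → d ≤ hammingDist x y

/-- A pair of disjoint sets is a perfect bitrade in `H(n,q)` if every radius-1 ball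
meets both parts in the same number (at most 1) of vertices. -/
def isPerfectBitrade {n q : ℕ} (Tp Tm : Set (HV n q)) : Prop :=
  Disjoint Tp Tm ∧ ∀ x : HV n q,
    (hBall x ∩ Tp).ncard = (hBall x ∩ Tm).ncard ∧ (hBall x ∩ Tp).ncard ≤ 1

/-- The weight of a vertex `x` with respect to a set `A`:
`|S₀(x) ∩ A| + |S₁(x) ∩ A| + (2/n)·|S₂(x) ∩ A|`. -/
noncomputable def wt {n q : ℕ} (A : Set (HV n q)) (x : HV n q) : ℚ :=
  ((hSphere x 0 ∩ A).ncard : ℚ) + ((hSphere x 1 ∩ A).ncard : ℚ)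
    + (2 / (n : ℚ)) * ((hSphere x 2 ∩ A).ncard : ℚ)

/-- Definition 3 (weight definition of extended perfect bitrade). -/
def weightBitrade {n q : ℕ} (Tp Tm : Set (HV n q)) : Prop :=
  Disjoint Tp Tm ∧ ∀ x : HV n q, wt Tp x = wt Tm x ∧ wt Tp x ≤ 1

/-- 0-1 indicator function of a set of vertices. -/
noncomputable def chi {n q : ℕ} (T : Set (HV n q)) (x : HV n q) : ℝ :=
  Set.indicator T (fun _ => (1 : ℝ)) x

/-- The adjacency operator of `H(n,q)`: sum of `f` over the neighbours of `x`. -/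
def nbrSum {n q : ℕ} [NeZero q] {R : Type*} [AddCommMonoid R]
    (f : HV n q → R) (x : HV n q) : R :=
  ∑ y ∈ Finset.univ.filter (fun y => hammingDist x y = 1), f y

/-- The `i`-projection of a code `C ⊆ V(H(m+1,q))`. -/
def proj {m q : ℕ} (i : Fin (m + 1)) (C : Set (HV (m + 1) q)) : Set (HV m q) :=
  {x | ∃ a : ZMod q, i.insertNth a x ∈ C}

/-- Definition 2 (projection definition of extended perfect bitrade). -/
def projBitrade {m q : ℕ} (Tp Tm : Set (HV (m + 1) q)) : Prop :=
  minDistGe Tp 4 ∧ minDistGe Tm 4 ∧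
    ∀ i : Fin (m + 1),
      isPerfectBitrade (proj i Tp \ proj i Tm) (proj i Tm \ proj i Tp)

/-- `f *ᵢ ψ`, where `ψ ≡ 1`: the function `x ↦ ∑ₐ f(xᵃᵢ)` on `H(m,q)`. -/
noncomputable def projFun {m q : ℕ} [NeZero q] (i : Fin (m + 1)) (f : HV (m + 1) q → ℂ)
    (x : HV m q) : ℂ :=
  ∑ a : ZMod q, f (i.insertNth a x)

/-- The cylinder `C_{x,i} = ⋃ₐ B(x + a·eᵢ)`. -/
def cylinder {n q : ℕ} (x : HV n q) (i : Fin n) : Set (HV n q) :=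
  ⋃ a : ZMod q, hBall (Function.update x i (x i + a))

/-- Definition 5 (cylinder definition of extended perfect bitrade). -/
def cylBitrade {n q : ℕ} (Tp Tm : Set (HV n q)) : Prop :=
  ∀ (x : HV n q) (i : Fin n),
    (cylinder x i ∩ Tp).ncard = (cylinder x i ∩ Tm).ncard ∧
      (cylinder x i ∩ Tp).ncard ≤ 1

/-- The matrix `S` from Definition 1. -/
noncomputable def Smat (n q : ℕ) : Matrix (Fin 3) (Fin 3) ℝ :=
  !![0, (n : ℝ) * ((q : ℝ) - 1), 0;
     1, (q : ℝ) - 2, ((n : ℝ) - 1) * ((q : ℝ) - 1);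
     0, (n : ℝ), (n : ℝ) * ((q : ℝ) - 2)]

/-- Definition 1 (matrix definition of extended perfect bitrade), existence of the
matrix `F` with the required properties. -/
def matrixBitrade {n q : ℕ} [NeZero q] (Tp Tm : Set (HV n q)) : Prop :=
  ∃ F : HV n q → Fin 3 → ℝ,
    (∀ x, F x 0 = chi Tp x - chi Tm x) ∧
    (∀ x, ∑ k : Fin 3, F x k = 0) ∧
    (∀ x, ({k : Fin 3 | F x k ≠ 0}).ncard ≤ 2) ∧
    (∀ (x : HV n q) (j : Fin 3),
      nbrSum (fun y => F y j) x = ∑ k : Fin 3, F x k * Smat n q k j)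

/-- Definition 4 (spectral definition of extended perfect bitrade). -/
def spectralBitrade {n q : ℕ} [NeZero q] (Tp Tm : Set (HV n q)) : Prop :=
  minDistGe Tp 4 ∧ minDistGe Tm 4 ∧
    ∃ g h : HV n q → ℝ,
      (∀ x, chi Tp x - chi Tm x = g x + h x) ∧
      (∀ x, nbrSum g x = -(n : ℝ) * g x) ∧
      (∀ x, nbrSum h x = ((q : ℝ) - 2) * h x)

theorem exists_hammingDist_eq_one_of_hammingDist_eq_succ {ι : Type*} [Fintype ι]
    [DecidableEq ι] {β : ι → Type*} [∀ i, DecidableEq (β i)] {x y : ∀ i, β i} {k : ℕ}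
    (hxy : hammingDist x y = k + 1) :
    ∃ z : ∀ i, β i, hammingDist x z = 1 ∧ hammingDist z y = k := by
  obtain ⟨i, hi⟩ : ∃ i, x i ≠ y i := by
    by_contra! h
    simp [funext h] at hxy
  refine ⟨Function.update x i (y i), ?_, ?_⟩
  · have : ({j | x j ≠ Function.update x i (y i) j} : Finset ι) = {i} := by
      ext j
      by_cases hj : j = i
      · subst hj; simp [hi]
      · simp [hj]
    simp [hammingDist, this]
  · have : ({j | Function.update x i (y i) j ≠ y j} : Finset ι) =
        ({j | x j ≠ y j} : Finset ι).erase i := by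
      ext j
      by_cases hj : j = i
      · subst hj; simp
      · simp [hj]
    rw [hammingDist, this, Finset.card_erase_of_mem (by simp [hi])]
    exact Nat.sub_eq_of_eq_add hxy

section Weight

variable {n q : ℕ} [NeZero q] {T : Set (HV n q)}

theorem one_le_ncard_hSphere_inter {z u : HV n q} {r : ℕ}
    (hu : u ∈ T) (hzu : hammingDist z u = r) : (1 : ℚ) ≤ (hSphere z r ∩ T).ncard := by
  have : 0 < (hSphere z r ∩ T).ncard := (Set.ncard_pos (Set.toFinite _)).mpr ⟨u, hzu, hu⟩
  exact_mod_cast this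

theorem two_le_wt_of_hammingDist_eq_one {x y : HV n q} (hx : x ∈ T) (hy : y ∈ T)
    (hxy : hammingDist x y = 1) : 2 ≤ wt T x := by
  have h₀ := one_le_ncard_hSphere_inter hx (hammingDist_self x)
  have h₁ := one_le_ncard_hSphere_inter hy hxy
  have h₂ : 0 ≤ 2 / (n : ℚ) * (hSphere x 2 ∩ T).ncard := by positivity
  unfold wt
  linarith

theorem one_lt_wt_of_hammingDist_eq_two {z u v : HV n q} {r : ℕ} (hr : r ≤ 1)
    (hu : u ∈ T) (hzu : hammingDist z u = r) (hv : v ∈ T) (hzv : hammingDist z v = 2) :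
    1 < wt T z := by
  have hn : (0 : ℚ) < 2 / n := by
    have : 2 ≤ n := by simpa [hzv] using hammingDist_le_card_fintype (x := z) (y := v)
    have : (0 : ℚ) < n := by exact_mod_cast (by omega : 0 < n)
    positivity
  have hr' := one_le_ncard_hSphere_inter hu hzu
  have h₂ := one_le_ncard_hSphere_inter hv hzv
  have h₀ : (0 : ℚ) ≤ (hSphere z 0 ∩ T).ncard := by positivity
  have h₁ : (0 : ℚ) ≤ (hSphere z 1 ∩ T).ncard := by positivity
  unfold wt
  interval_cases r <;> nlinarith

theorem minDistGe_four_of_wt_le_one (hwt : ∀ z, wt T z ≤ 1) : minDistGe T 4 := by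
  intro x hx y hy hne
  by_contra! hlt
  have hpos : 0 < hammingDist x y := hammingDist_pos.mpr hne
  interval_cases hd : hammingDist x y
  · linarith [hwt x, two_le_wt_of_hammingDist_eq_one hx hy hd]
  · linarith [hwt x, one_lt_wt_of_hammingDist_eq_two zero_le_one hx (hammingDist_self x) hy hd]
  · obtain ⟨z, hxz, hzy⟩ := exists_hammingDist_eq_one_of_hammingDist_eq_succ hd
    rw [hammingDist_comm] at hxz
    linarith [hwt z, one_lt_wt_of_hammingDist_eq_two le_rfl hx hxz hy hzy]

end Weight

theorem stmt1_general (q n : ℕ) (hq : 3 ≤ q)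
    (Tp Tm : Set (HV n q)) (h : weightBitrade Tp Tm) :
    minDistGe Tp 4 ∧ minDistGe Tm 4 := by
  have : NeZero q := ⟨by omega⟩
  obtain ⟨-, hw⟩ := h
  exact ⟨minDistGe_four_of_wt_le_one fun z => (hw z).2,
    minDistGe_four_of_wt_le_one fun z => (hw z).1 ▸ (hw z).2⟩

/-- the weight definition (Definition 3) implies code distance at least 4. -/
theorem stmt1 (q n : ℕ) (hq : 3 ≤ q) (hn : 2 ≤ n)
    (Tp Tm : Set (HV n q)) (h : weightBitrade Tp Tm) :
    minDistGe Tp 4 ∧ minDistGe Tm 4 :=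
  stmt1_general q n hq Tp Tm h
end

section
/- Let q ≥ 3, n ≥ 2, and let A ⊆ V(H(n,q)) be a code with code distance at least 4. Then for every vertex x of H(n,q), the weight satisfies w_A(x) ≤ 1. -/
open Finset

/-!
Two codewords `y, z` with `d(x,y) + d(x,z) < 4` coincide, by the triangle inequality. Hence
`S₀(x) ∪ S₁(x)` holds at most one codeword, and if it holds one then `S₂(x)` holds none. The
codewords on `S₂(x)` differ from `x` in pairwise disjoint pairs of coordinates (two such pairs
sharing a coordinate would put the codewords at distance at most 3), so there are at most `n / 2`
of them. In every case the weight is at most `1`.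
-/

section Hamming

variable {ι : Type*} [Fintype ι] {β : ι → Type*} [∀ i, DecidableEq (β i)]

def diffCoords (x y : ∀ i, β i) : Finset ι := {i | x i ≠ y i}

theorem card_diffCoords (x y : ∀ i, β i) : (diffCoords x y).card = hammingDist x y := rfl

theorem diffCoords_subset_union [DecidableEq ι] (x y z : ∀ i, β i) :
    diffCoords y z ⊆ diffCoords x y ∪ diffCoords x z := by
  intro i
  simp only [diffCoords, Finset.mem_union, Finset.mem_filter, Finset.mem_univ, true_and]
  contrapose!
  rintro ⟨hxy, hxz⟩
  rw [← hxy, hxz]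

theorem disjoint_diffCoords_of_hammingDist_eq [DecidableEq ι] {x y z : ∀ i, β i} {r : ℕ}
    (hy : hammingDist x y = r) (hz : hammingDist x z = r) (hyz : 2 * r ≤ hammingDist y z) :
    Disjoint (diffCoords x y) (diffCoords x z) := by
  rw [← Finset.card_union_eq_card_add_card]
  have hunion := Finset.card_union_le (diffCoords x y) (diffCoords x z)
  have hle := Finset.card_le_card (diffCoords_subset_union x y z)
  simp only [card_diffCoords] at hunion hle ⊢
  omega

theorem mul_ncard_le_card_of_forall_hammingDist_eq {x : ∀ i, β i} {r : ℕ}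
    {S : Set (∀ i, β i)} (hS : ∀ y ∈ S, hammingDist x y = r)
    (hdist : ∀ y ∈ S, ∀ z ∈ S, y ≠ z → 2 * r ≤ hammingDist y z) :
    r * S.ncard ≤ Fintype.card ι := by
  classical
  rcases S.finite_or_infinite with hfin | hinf
  · have hdisj : (hfin.toFinset : Set (∀ i, β i)).PairwiseDisjoint (diffCoords x) := by
      intro y hy z hz hyz
      simp only [Finset.mem_coe, Set.Finite.mem_toFinset] at hy hz
      exact disjoint_diffCoords_of_hammingDist_eq (hS y hy) (hS z hz) (hdist y hy z hz hyz)
    calc r * S.ncard = (hfin.toFinset.biUnion (diffCoords x)).card := by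
          rw [Finset.card_biUnion hdisj, Set.ncard_eq_toFinset_card S hfin, mul_comm,
            Finset.sum_const_nat]
          intro y hy
          rw [card_diffCoords, hS y (hfin.mem_toFinset.mp hy)]
      _ ≤ Fintype.card ι := Finset.card_le_univ _
  · simp [hinf.ncard]

theorem eq_of_hammingDist_add_hammingDist_lt {A : Set (∀ i, β i)} {d : ℕ}
    (hA : ∀ y ∈ A, ∀ z ∈ A, y ≠ z → d ≤ hammingDist y z) {x y z : ∀ i, β i}
    (hy : y ∈ A) (hz : z ∈ A) (h : hammingDist x y + hammingDist x z < d) : y = z := by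
  by_contra hyz
  have := hammingDist_triangle y x z
  rw [hammingDist_comm y x] at this
  have := hA y hy z hz hyz
  omega

end Hamming

section Code

variable {n q : ℕ} {A : Set (HV n q)} {d : ℕ}

theorem ncard_hSphere_inter_le_one (hA : minDistGe A d) (x : HV n q) {r : ℕ} (hr : 2 * r < d) :
    (hSphere x r ∩ A).ncard ≤ 1 := by
  have hsub : (hSphere x r ∩ A).Subsingleton := fun y hy z hz =>
    eq_of_hammingDist_add_hammingDist_lt hA hy.2 hz.2 (by rw [hy.1, hz.1]; omega)
  exact (Set.ncard_le_one hsub.finite).2 hsub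

theorem ncard_hSphere_inter_eq_zero_of_ne_zero (hA : minDistGe A d) (x : HV n q) {r s : ℕ}
    (hrs : r + s < d) (hne : r ≠ s) (h : (hSphere x r ∩ A).ncard ≠ 0) :
    (hSphere x s ∩ A).ncard = 0 := by
  obtain ⟨y, hy⟩ := Set.nonempty_of_ncard_ne_zero h
  suffices hSphere x s ∩ A = ∅ by rw [this, Set.ncard_empty]
  refine Set.eq_empty_iff_forall_notMem.2 fun z hz => ?_
  have hyz := eq_of_hammingDist_add_hammingDist_lt hA hy.2 hz.2 (by rw [hy.1, hz.1]; omega)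
  exact hne (hy.1.symm.trans (hyz ▸ hz.1))

theorem two_mul_ncard_hSphere_two_inter_le (hA : minDistGe A 4) (x : HV n q) :
    2 * (hSphere x 2 ∩ A).ncard ≤ n := by
  simpa using mul_ncard_le_card_of_forall_hammingDist_eq (fun y hy => hy.1)
    fun y hy z hz hyz => hA y hy.2 z hz.2 hyz

end Code

theorem stmt2_general (q n : ℕ)
    (A : Set (HV n q)) (hA : minDistGe A 4) (x : HV n q) :
    wt A x ≤ 1 := by
  set a₀ := (hSphere x 0 ∩ A).ncard
  set a₁ := (hSphere x 1 ∩ A).ncard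
  set a₂ := (hSphere x 2 ∩ A).ncard
  have h₀ : a₀ ≤ 1 := ncard_hSphere_inter_le_one hA x (by norm_num)
  have h₁ : a₁ ≤ 1 := ncard_hSphere_inter_le_one hA x (by norm_num)
  have h₀₁ : a₀ ≠ 0 → a₁ = 0 :=
    ncard_hSphere_inter_eq_zero_of_ne_zero hA x (by norm_num) (by norm_num)
  have h₂₀ : a₂ ≠ 0 → a₀ = 0 :=
    ncard_hSphere_inter_eq_zero_of_ne_zero hA x (by norm_num) (by norm_num)
  have h₂₁ : a₂ ≠ 0 → a₁ = 0 :=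
    ncard_hSphere_inter_eq_zero_of_ne_zero hA x (by norm_num) (by norm_num)
  have h₂ : (2 / (n : ℚ)) * a₂ ≤ 1 := by
    rw [div_mul_eq_mul_div]
    exact div_le_one_of_le₀ (by exact_mod_cast two_mul_ncard_hSphere_two_inter_le hA x)
      n.cast_nonneg
  change (a₀ : ℚ) + a₁ + 2 / n * a₂ ≤ 1
  rcases eq_or_ne a₂ 0 with ha₂ | ha₂
  · have : a₀ + a₁ ≤ 1 := by omega
    rw [ha₂, Nat.cast_zero, mul_zero, add_zero]
    exact_mod_cast this
  · rw [h₂₀ ha₂, h₂₁ ha₂]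
    simpa using h₂

/-- a code of distance at least 4 has `w_A(x) ≤ 1` for every vertex `x`. -/
theorem stmt2 (q n : ℕ) (hq : 3 ≤ q) (hn : 2 ≤ n)
    (A : Set (HV n q)) (hA : minDistGe A 4) (x : HV n q) :
    wt A x ≤ 1 :=
  stmt2_general q n A hA x
end

section
/- Let q ≥ 3, n ≥ 2, and let A ⊆ V(H(n,q)) be a code with code distance at least 4. If w_A(x) = 1 for a vertex x, then exactly one of the following three cases occurs: (i) |S_0(x) ∩ A| = 1, |S_1(x) ∩ A| = 0 and |S_2(x) ∩ A| = 0; (ii) |S_0(x) ∩ A| = 0, |S_1(x) ∩ A| = 1 and |S_2(x) ∩ A| = 0; (iii) |S_0(x) ∩ A| = 0, |S_1(x) ∩ A| = 0 and 2·|S_2(x) ∩ A| = n. -/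
open Finset

/-! Two codewords at distances `r` and `s` from `x` are at distance at most `r + s` from each
other, so with code distance 4 the set `A` meets `S₀(x) ∪ S₁(x) ∪ S₂(x)` either in `x` alone, in a
single neighbour of `x` alone, or only inside `S₂(x)`; in the last case `w_A(x) = 1` reads
`(2/n)·|S₂(x) ∩ A| = 1`. -/

section CodeDistance

variable {n q : ℕ} {A : Set (HV n q)} {d r s : ℕ} {x y : HV n q}

theorem eq_of_mem_hSphere_inter (hA : minDistGe A d) (hy : y ∈ hSphere x r ∩ A) {z : HV n q}
    (hz : z ∈ hSphere x s ∩ A) (hrs : r + s < d) : y = z := by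
  obtain ⟨hxy : hammingDist x y = r, hyA⟩ := hy
  obtain ⟨hxz : hammingDist x z = s, hzA⟩ := hz
  by_contra hyz
  have htri := hammingDist_triangle y x z
  rw [hammingDist_comm y x] at htri
  have := hA y hyA z hzA hyz
  omega

theorem hSphere_inter_eq_empty (hA : minDistGe A d) (hy : y ∈ hSphere x r ∩ A) (hrs : r ≠ s)
    (hd : r + s < d) : hSphere x s ∩ A = ∅ := by
  refine Set.eq_empty_of_forall_notMem fun z hz => hrs ?_
  obtain rfl := eq_of_mem_hSphere_inter hA hy hz hd
  exact hy.1.symm.trans hz.1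

theorem ncard_hSphere_inter_eq_one (hA : minDistGe A d) (hy : y ∈ hSphere x r ∩ A)
    (hd : r + r < d) : (hSphere x r ∩ A).ncard = 1 :=
  Set.ncard_eq_one.mpr
    ⟨y, Set.eq_singleton_iff_unique_mem.mpr
      ⟨hy, fun _ hz => eq_of_mem_hSphere_inter hA hz hy hd⟩⟩

end CodeDistance

theorem two_mul_ncard_hSphere_two_eq {n q : ℕ} {A : Set (HV n q)} {x : HV n q}
    (h0 : hSphere x 0 ∩ A = ∅) (h1 : hSphere x 1 ∩ A = ∅) (hw : wt A x = 1) :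
    2 * (hSphere x 2 ∩ A).ncard = n := by
  have hw' : (2 / n : ℚ) * (hSphere x 2 ∩ A).ncard = 1 := by simpa [wt, h0, h1] using hw
  -- `2 / 0 = 0` in `ℚ`, so `hw'` excludes `n = 0`.
  have hn : (n : ℚ) ≠ 0 := by
    rintro hn
    simp [hn] at hw'
  field_simp at hw'
  exact_mod_cast hw'

theorem stmt3_general (q n : ℕ)
    (A : Set (HV n q)) (hA : minDistGe A 4) (x : HV n q) (hw : wt A x = 1) :
    ((hSphere x 0 ∩ A).ncard = 1 ∧ (hSphere x 1 ∩ A).ncard = 0 ∧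
        (hSphere x 2 ∩ A).ncard = 0) ∨
      ((hSphere x 0 ∩ A).ncard = 0 ∧ (hSphere x 1 ∩ A).ncard = 1 ∧
        (hSphere x 2 ∩ A).ncard = 0) ∨
      ((hSphere x 0 ∩ A).ncard = 0 ∧ (hSphere x 1 ∩ A).ncard = 0 ∧
        2 * (hSphere x 2 ∩ A).ncard = n) := by
  rcases (hSphere x 0 ∩ A).eq_empty_or_nonempty with h0 | ⟨y, hy⟩
  · rcases (hSphere x 1 ∩ A).eq_empty_or_nonempty with h1 | ⟨y, hy⟩
    · right; right
      rw [h0, h1, Set.ncard_empty]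
      exact ⟨rfl, rfl, two_mul_ncard_hSphere_two_eq h0 h1 hw⟩
    · right; left
      rw [h0, hSphere_inter_eq_empty hA hy (s := 2) (by norm_num) (by norm_num), Set.ncard_empty]
      exact ⟨rfl, ncard_hSphere_inter_eq_one hA hy (by norm_num), rfl⟩
  · left
    rw [hSphere_inter_eq_empty hA hy (s := 1) (by norm_num) (by norm_num),
      hSphere_inter_eq_empty hA hy (s := 2) (by norm_num) (by norm_num), Set.ncard_empty]
    exact ⟨ncard_hSphere_inter_eq_one hA hy (by norm_num), rfl, rfl⟩

/-- if `A` has code distance at least 4 and `w_A(x) = 1`, then exactly one of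
three cases occurs (the cases are pairwise mutually exclusive). -/
theorem stmt3 (q n : ℕ) (hq : 3 ≤ q) (hn : 2 ≤ n)
    (A : Set (HV n q)) (hA : minDistGe A 4) (x : HV n q) (hw : wt A x = 1) :
    ((hSphere x 0 ∩ A).ncard = 1 ∧ (hSphere x 1 ∩ A).ncard = 0 ∧
        (hSphere x 2 ∩ A).ncard = 0) ∨
      ((hSphere x 0 ∩ A).ncard = 0 ∧ (hSphere x 1 ∩ A).ncard = 1 ∧
        (hSphere x 2 ∩ A).ncard = 0) ∨
      ((hSphere x 0 ∩ A).ncard = 0 ∧ (hSphere x 1 ∩ A).ncard = 0 ∧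
        2 * (hSphere x 2 ∩ A).ncard = n) :=
  stmt3_general q n A hA x hw
end

section
/- Let q ≥ 3 and n ≥ 1, and let (T⁺, T⁻) be a pair of disjoint subsets of V(H(n,q)) with characteristic function f = χ_{T⁺} − χ_{T⁻} : V → ℝ. Then (T⁺, T⁻) is a perfect bitrade in H(n,q) if and only if T⁺ and T⁻ are codes with code distance at least 3 and f satisfies Af = −f, where A is the adjacency operator of H(n,q), i.e., Σ_{y adjacent to x} f(y) = −f(x) for every vertex x. -/
open Finset

/-! The ball `B(x)` is `x` together with its neighbours, so `|B(x) ∩ T| = χ_T(x) + (Aχ_T)(x)`;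
hence the two ball counts agree at `x` exactly when `(Af)(x) = -f(x)`. A set meets every ball at
most once exactly when it has distance at least `3`, since two words at distance at most `2` lie
in a common ball. -/

section Hamming

variable {ι : Type*} [Fintype ι] [DecidableEq ι] {β : ι → Type*} [∀ i, DecidableEq (β i)]

theorem hammingDist_update_le_one (x : ∀ i, β i) (i : ι) (a : β i) :
    hammingDist x (Function.update x i a) ≤ 1 := by
  refine (Finset.card_le_card fun j hj => ?_).trans (Finset.card_singleton i).le
  rw [Finset.mem_singleton]
  by_contra hji
  exact (Finset.mem_filter.1 hj).2 (Function.update_of_ne hji a x).symm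

theorem hammingDist_update_lt {x y : ∀ i, β i} {i : ι} (h : x i ≠ y i) :
    hammingDist (Function.update x i (y i)) y < hammingDist x y := by
  refine Finset.card_lt_card ⟨fun j hj => ?_, fun hsub => ?_⟩
  · rcases eq_or_ne j i with rfl | hji
    · simp at hj
    · simpa [hammingDist, Function.update_of_ne hji] using hj
  · simpa using hsub (Finset.mem_filter.2 ⟨Finset.mem_univ i, h⟩)

theorem exists_hammingDist_le_one_of_le_two {x y : ∀ i, β i} (h : hammingDist x y ≤ 2) :
    ∃ z, hammingDist x z ≤ 1 ∧ hammingDist z y ≤ 1 := by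
  by_cases hxy : x = y
  · exact ⟨x, by simp, by simp [hxy]⟩
  obtain ⟨i, hi⟩ := Function.ne_iff.1 hxy
  exact ⟨Function.update x i (y i), hammingDist_update_le_one x i (y i),
    by have := hammingDist_update_lt hi; omega⟩

theorem filter_hammingDist_le_one_eq_insert [∀ i, Fintype (β i)] (x : ∀ i, β i) :
    Finset.univ.filter (fun y => hammingDist x y ≤ 1)
      = insert x (Finset.univ.filter (fun y => hammingDist x y = 1)) := by
  ext y
  simp only [Finset.mem_filter, Finset.mem_univ, true_and, Finset.mem_insert]
  rw [Nat.le_one_iff_eq_zero_or_eq_one, hammingDist_eq_zero, eq_comm]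

end Hamming

section BallCount

variable {n q : ℕ} [NeZero q]

theorem ncard_hBall_inter (x : HV n q) (T : Set (HV n q)) :
    ((hBall x ∩ T).ncard : ℝ) = chi T x + nbrSum (chi T) x := by
  classical
  have hball : hBall x ∩ T =
      ↑((Finset.univ.filter fun y => hammingDist x y ≤ 1).filter (· ∈ T)) := by
    ext y; simp [hBall]
  rw [hball, Set.ncard_coe_finset, Finset.card_filter, Nat.cast_sum, filter_hammingDist_le_one_eq_insert,
    Finset.sum_insert (by simp), nbrSum]
  simp [chi, Set.indicator_apply]

theorem ncard_hBall_inter_eq_iff (x : HV n q) (Tp Tm : Set (HV n q)) :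
    (hBall x ∩ Tp).ncard = (hBall x ∩ Tm).ncard ↔
      nbrSum (fun y => chi Tp y - chi Tm y) x = -(chi Tp x - chi Tm x) := by
  rw [← Nat.cast_inj (R := ℝ), ncard_hBall_inter, ncard_hBall_inter]
  simp only [nbrSum, Finset.sum_sub_distrib]
  constructor <;> intro h <;> linarith

theorem minDistGe_three_iff {T : Set (HV n q)} :
    minDistGe T 3 ↔ ∀ x, (hBall x ∩ T).ncard ≤ 1 := by
  constructor
  · intro hT x
    refine (Set.ncard_le_one (Set.toFinite _)).2 fun a ha b hb => ?_
    by_contra hab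
    have hxa : hammingDist x a ≤ 1 := ha.1
    have hxb : hammingDist x b ≤ 1 := hb.1
    have := hammingDist_triangle_left a b x
    have := hT a ha.2 b hb.2 hab
    omega
  · intro hT a ha b hb hab
    by_contra! hlt
    obtain ⟨z, haz, hzb⟩ := exists_hammingDist_le_one_of_le_two (Nat.le_of_lt_succ hlt)
    rw [hammingDist_comm] at haz
    exact hab ((Set.ncard_le_one (Set.toFinite _)).1 (hT z) a ⟨haz, ha⟩ b ⟨hzb, hb⟩)

end BallCount

theorem stmt5_general (q n : ℕ) [NeZero q]
    (Tp Tm : Set (HV n q)) (hdisj : Disjoint Tp Tm) :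
    isPerfectBitrade Tp Tm ↔
      (minDistGe Tp 3 ∧ minDistGe Tm 3 ∧
        ∀ x : HV n q,
          nbrSum (fun y => chi Tp y - chi Tm y) x = -(chi Tp x - chi Tm x)) := by
  constructor
  · rintro ⟨-, hball⟩
    exact ⟨minDistGe_three_iff.2 fun x => (hball x).2,
      minDistGe_three_iff.2 fun x => (hball x).1 ▸ (hball x).2,
      fun x => (ncard_hBall_inter_eq_iff x Tp Tm).1 (hball x).1⟩
  · rintro ⟨hTp, -, heigen⟩
    exact ⟨hdisj, fun x =>
      ⟨(ncard_hBall_inter_eq_iff x Tp Tm).2 (heigen x), minDistGe_three_iff.1 hTp x⟩⟩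

/-- `(T⁺,T⁻)` is a perfect bitrade iff both parts have distance at least 3
and `f = χ₊ - χ₋` satisfies `Af = -f`. -/
theorem stmt5 (q n : ℕ) [NeZero q] (hq : 3 ≤ q) (hn : 1 ≤ n)
    (Tp Tm : Set (HV n q)) (hdisj : Disjoint Tp Tm) :
    isPerfectBitrade Tp Tm ↔
      (minDistGe Tp 3 ∧ minDistGe Tm 3 ∧
        ∀ x : HV n q,
          nbrSum (fun y => chi Tp y - chi Tm y) x = -(chi Tp x - chi Tm x)) :=
  stmt5_general q n Tp Tm hdisj
end

section
/- Let q ≥ 2, n ≥ 2, and let f : V(H(n,q)) → ℂ satisfy Af = (n(q−1) − jq)·f for some integer j with 0 ≤ j ≤ n−1, where A is the adjacency operator of H(n,q). Then for every coordinate i ∈ {1,…,n}, the function f *_i ψ on H(n−1,q) defined by (f *_i ψ)(x) = Σ_{a ∈ ZMod q} f(x^a_i) satisfies A'(f *_i ψ) = ((n−1)(q−1) − jq)·(f *_i ψ), where A' is the adjacency operator of H(n−1,q). Moreover, if Af = −n·f (the case j = n), then f *_i ψ ≡ 0 for every i. -/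
/-! Write `A = ∑_c (J_c - 1)`, where `J_c` sums a function over the line through a vertex in
direction `c`. Summing `A f` along the line in direction `i` through `x`, the term `J_i` contributes
`q · (f *ᵢ ψ)(x)` and the terms `J_c` with `c ≠ i` commute with `*ᵢ ψ`, which gives
`∑ₐ (A f)(xᵃᵢ) = (q - 1) · (f *ᵢ ψ)(x) + A'(f *ᵢ ψ)(x)`; hence an eigenvalue `μ` of `A` becomes the
eigenvalue `μ - (q - 1)` of `A'`. If `A f = -n f`, then `∑_c J_c f = 0`, and pairing with `f̄`
gives `∑_c ‖f *_c ψ‖² = 0`, because `⟨f, J_c f⟩ = ‖f *_c ψ‖²`. -/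

open Finset

open Function

theorem hammingDist_eq_one_iff {ι α : Type*} [Fintype ι] [DecidableEq ι] [DecidableEq α]
    {y z : ι → α} : hammingDist y z = 1 ↔ ∃ c b, b ≠ y c ∧ update y c b = z := by
  constructor
  · intro h
    obtain ⟨c, hc⟩ := Finset.card_eq_one.mp h
    have hdiff : ∀ j, y j ≠ z j ↔ j = c := fun j => by
      simpa using Finset.ext_iff.mp hc j
    refine ⟨c, z c, fun h => (hdiff c).mpr rfl h.symm, funext fun j => ?_⟩
    rcases eq_or_ne j c with rfl | hj
    · simp
    · rw [update_of_ne hj]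
      exact not_not.mp (mt (hdiff j).mp hj)
  · rintro ⟨c, b, hb, rfl⟩
    refine Finset.card_eq_one.mpr ⟨c, Finset.ext fun j => ?_⟩
    rcases eq_or_ne j c with rfl | hj
    · simp [hb.symm]
    · simp [hj]

section

variable {q : ℕ} [NeZero q]

theorem nbrSum_eq_sum_sum_erase {n : ℕ} {R : Type*} [AddCommMonoid R] (f : HV n q → R)
    (y : HV n q) : nbrSum f y = ∑ c, ∑ b ∈ univ.erase (y c), f (update y c b) := by
  have hnbr : univ.filter (fun z => hammingDist y z = 1)
      = (univ.sigma fun c => univ.erase (y c)).image fun p => update y p.1 p.2 := by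
    ext z
    simp [hammingDist_eq_one_iff]
  have hinj : Set.InjOn (fun p : Σ _ : Fin n, ZMod q => update y p.1 p.2)
      (univ.sigma fun c => univ.erase (y c)) := by
    rintro ⟨c, b⟩ hb ⟨c', b'⟩ hb' h
    simp only [mem_coe, mem_sigma, mem_univ, mem_erase, true_and, and_true] at hb hb' h
    obtain rfl : c = c' := by
      by_contra hne
      simpa [update_of_ne hne, hb] using congrFun h c
    simpa using congrFun h c
  rw [nbrSum, hnbr, sum_image hinj, sum_sigma]

def lineSum {n : ℕ} {R : Type*} [AddCommMonoid R] (f : HV n q → R) (y : HV n q) (c : Fin n) : R :=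
  ∑ b, f (update y c b)

theorem nbrSum_add_nsmul_eq_sum_lineSum {n : ℕ} {R : Type*} [AddCommMonoid R] (f : HV n q → R)
    (y : HV n q) : nbrSum f y + n • f y = ∑ c, lineSum f y c := by
  have hline : ∀ c, ∑ b ∈ univ.erase (y c), f (update y c b) + f y = lineSum f y c := fun c => by
    simpa [lineSum] using sum_erase_add univ (fun b => f (update y c b)) (mem_univ (y c))
  simp only [nbrSum_eq_sum_sum_erase, ← hline, sum_add_distrib, sum_const, card_univ,
    Fintype.card_fin]

variable {m : ℕ}

theorem lineSum_eq_projFun_removeNth (f : HV (m + 1) q → ℂ) (y : HV (m + 1) q) (c : Fin (m + 1)) :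
    lineSum f y c = projFun c f (c.removeNth y) := by
  simp [lineSum, projFun, Fin.insertNth_removeNth]

theorem sum_lineSum_insertNth_self (f : HV (m + 1) q → ℂ) (i : Fin (m + 1)) (x : HV m q) :
    ∑ a, lineSum f (i.insertNth a x) i = q * projFun i f x := by
  simp [lineSum, projFun]

theorem sum_lineSum_insertNth_succAbove (f : HV (m + 1) q → ℂ) (i : Fin (m + 1)) (x : HV m q)
    (k : Fin m) : ∑ a, lineSum f (i.insertNth a x) (i.succAbove k) = lineSum (projFun i f) x k := by
  simp only [lineSum, projFun, ← Fin.insertNth_update]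
  exact sum_comm

theorem sum_nbrSum_insertNth (f : HV (m + 1) q → ℂ) (i : Fin (m + 1)) (x : HV m q) :
    ∑ a, nbrSum f (i.insertNth a x) = (q - 1) * projFun i f x + nbrSum (projFun i f) x := by
  have hf := fun a => nbrSum_add_nsmul_eq_sum_lineSum f (i.insertNth a x)
  have hP := nbrSum_add_nsmul_eq_sum_lineSum (projFun i f) x
  have hlines : ∑ a, ∑ c, lineSum f (i.insertNth a x) c
      = q * projFun i f x + ∑ k, lineSum (projFun i f) x k := by
    rw [sum_comm, Fin.sum_univ_succAbove _ i, sum_lineSum_insertNth_self]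
    simp only [sum_lineSum_insertNth_succAbove]
  simp only [← hf, ← hP, sum_add_distrib, nsmul_eq_mul, ← mul_sum] at hlines
  have hproj : ∑ a, f (i.insertNth a x) = projFun i f x := rfl
  push_cast [hproj] at hlines
  linear_combination hlines

theorem nbrSum_projFun_of_forall_nbrSum_eq_mul {f : HV (m + 1) q → ℂ} {μ : ℂ}
    (hf : ∀ y, nbrSum f y = μ * f y) (i : Fin (m + 1)) (x : HV m q) :
    nbrSum (projFun i f) x = (μ - (q - 1)) * projFun i f x := by
  have h := sum_nbrSum_insertNth f i x
  simp only [hf, ← mul_sum] at h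
  change μ * projFun i f x = _ at h
  linear_combination -h

theorem sum_mul_projFun_removeNth (g f : HV (m + 1) q → ℂ) (c : Fin (m + 1)) :
    ∑ y, g y * projFun c f (c.removeNth y) = ∑ z, projFun c g z * projFun c f z := by
  rw [← (Fin.insertNthEquiv (fun _ => ZMod q) c).sum_comp, Fintype.sum_prod_type, sum_comm]
  refine sum_congr rfl fun z _ => ?_
  have happly : ∀ a, Fin.insertNthEquiv (fun _ => ZMod q) c (a, z) = c.insertNth a z :=
    fun _ => rfl
  simp [happly, projFun, sum_mul]

theorem projFun_eq_zero_of_forall_nbrSum_eq_neg {f : HV (m + 1) q → ℂ}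
    (hf : ∀ y, nbrSum f y = -((m + 1 : ℕ) : ℂ) * f y) (i : Fin (m + 1)) (x : HV m q) :
    projFun i f x = 0 := by
  have hlines : ∀ y : HV (m + 1) q, ∑ c, projFun c f (c.removeNth y) = 0 := fun y => by
    have h := nbrSum_add_nsmul_eq_sum_lineSum f y
    simp only [hf, nsmul_eq_mul, lineSum_eq_projFun_removeNth] at h
    push_cast at h
    linear_combination -h
  have hsq : ∑ c, ∑ z, Complex.normSq (projFun c f z) = 0 := by
    have h : ∑ y, (starRingEnd ℂ) (f y) * ∑ c, projFun c f (c.removeNth y) = 0 := by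
      simp [hlines]
    simp only [mul_sum] at h
    rw [sum_comm] at h
    have hconj : ∀ c z, projFun c (fun y => (starRingEnd ℂ) (f y)) z
        = (starRingEnd ℂ) (projFun c f z) := fun c z => by simp [projFun]
    simp only [sum_mul_projFun_removeNth, hconj, ← Complex.normSq_eq_conj_mul_self] at h
    exact_mod_cast h
  have hnonneg : ∀ c, 0 ≤ ∑ z, Complex.normSq (projFun c f z) := fun c =>
    sum_nonneg fun z _ => Complex.normSq_nonneg _
  have hi := (Fintype.sum_eq_zero_iff_of_nonneg hnonneg).mp hsq
  have hix := (Fintype.sum_eq_zero_iff_of_nonneg fun z => Complex.normSq_nonneg _).mp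
    (congrFun hi i)
  exact Complex.normSq_eq_zero.mp (congrFun hix x)

end

theorem stmt6_general (q m : ℕ) [NeZero q] :
    (∀ (f : HV (m + 1) q → ℂ) (j : ℕ), j ≤ m →
      (∀ x, nbrSum f x = (((m + 1 : ℕ) : ℂ) * ((q : ℂ) - 1) - (j : ℂ) * (q : ℂ)) * f x) →
      ∀ (i : Fin (m + 1)) (x : HV m q),
        nbrSum (projFun i f) x
          = ((m : ℂ) * ((q : ℂ) - 1) - (j : ℂ) * (q : ℂ)) * projFun i f x) ∧
    (∀ f : HV (m + 1) q → ℂ,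
      (∀ x, nbrSum f x = (-((m + 1 : ℕ) : ℂ)) * f x) →
      ∀ (i : Fin (m + 1)) (x : HV m q), projFun i f x = 0) := by
  refine ⟨fun f j _ hf i x => ?_, fun f hf => projFun_eq_zero_of_forall_nbrSum_eq_neg hf⟩
  rw [nbrSum_projFun_of_forall_nbrSum_eq_mul hf]
  push_cast
  ring

/-- here `n = m + 1 ≥ 2`: (1) if `Af = (n(q-1) - jq)·f` with `0 ≤ j ≤ n-1`,
then `f *ᵢ ψ` is a `((n-1)(q-1) - jq)`-eigenfunction of `H(n-1,q)` for every `i`;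
(2) if `Af = -n·f`, then `f *ᵢ ψ ≡ 0` for every `i`. -/
theorem stmt6 (q m : ℕ) [NeZero q] (hq : 2 ≤ q) (hm : 1 ≤ m) :
    (∀ (f : HV (m + 1) q → ℂ) (j : ℕ), j ≤ m →
      (∀ x, nbrSum f x = (((m + 1 : ℕ) : ℂ) * ((q : ℂ) - 1) - (j : ℂ) * (q : ℂ)) * f x) →
      ∀ (i : Fin (m + 1)) (x : HV m q),
        nbrSum (projFun i f) x
          = ((m : ℂ) * ((q : ℂ) - 1) - (j : ℂ) * (q : ℂ)) * projFun i f x) ∧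
    (∀ f : HV (m + 1) q → ℂ,
      (∀ x, nbrSum f x = (-((m + 1 : ℕ) : ℂ)) * f x) →
      ∀ (i : Fin (m + 1)) (x : HV m q), projFun i f x = 0) :=
  stmt6_general q m
end

section
/- Let q ≥ 3 and n ≥ 2. If a pair (T⁺, T⁻) of disjoint subsets of V(H(n,q)) satisfies the weight definition of extended perfect bitrade (Definition 3), then it satisfies the projection definition (Definition 2): T⁺ and T⁻ have code distance at least 4 and for every coordinate i the i-projection of (T⁺, T⁻) is a perfect bitrade in H(n−1,q). -/
/-
If two words of `T` were at distance at most 3, some vertex would lie within distance 1 of one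
and 2 of the other, and its weight would exceed 1; so both parts have code distance 4. Then a
radius-1 ball of `H(n-1,q)` meets each `i`-projection in at most one word, since two such words
lift to codewords at distance at most 3.

If `B(x)` meets the `i`-projection of `T⁺`, lifting `x` suitably to `v = x^a_i` gives
`w_{T⁺}(v) ≥ 1`, hence `w_{T⁻}(v) ≥ 1`. The codewords of `T⁻` in `S₂(v)` differ from `v` in
pairwise disjoint pairs of coordinates, so if none of them touches coordinate `i` there are fewer
than `n/2` of them; hence `T⁻` has a word in `B(v)` or one in `S₂(v)` differing from `v` at `i`,
and either projects into `B(x)`.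
-/


open Finset

section Hamming

variable {ι α : Type*} [Fintype ι] [DecidableEq ι] [DecidableEq α]

theorem exists_hammingDist_eq_one_and_add_one {x y : ι → α} (h : x ≠ y) :
    ∃ v, hammingDist x v = 1 ∧ hammingDist v y + 1 = hammingDist x y := by
  obtain ⟨j, hj⟩ := Function.ne_iff.mp h
  refine ⟨Function.update x j (y j), ?_, ?_⟩
  · have hsupp : ({k | x k ≠ Function.update x j (y j) k} : Finset ι) = {j} := by
      ext k
      rcases eq_or_ne k j with rfl | hk <;> simp [*]
    rw [hammingDist, hsupp, Finset.card_singleton]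
  · have hsupp : ({k | Function.update x j (y j) k ≠ y k} : Finset ι)
        = ({k | x k ≠ y k} : Finset ι).erase j := by
      ext k
      rcases eq_or_ne k j with rfl | hk <;> simp [*]
    rw [hammingDist, hsupp, Finset.card_erase_add_one (by simpa using hj), hammingDist]

theorem hammingDist_insertNth {m : ℕ} (i : Fin (m + 1)) (a : α) (x : Fin m → α)
    (y : Fin (m + 1) → α) :
    hammingDist (i.insertNth a x) y =
      (if a = y i then 0 else 1) + hammingDist x (i.removeNth y) := by
  simp only [hammingDist]
  rw [Finset.card_filter, Finset.card_filter, Fin.sum_univ_succAbove _ i]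
  congr 1
  · simp [ite_not]
  · refine Finset.sum_congr rfl fun j _ => ?_
    simp only [Fin.insertNth_apply_succAbove, Fin.removeNth]
    split <;> simp_all

theorem hammingDist_insertNth_insertNth {m : ℕ} (i : Fin (m + 1)) (a b : α) (x y : Fin m → α) :
    hammingDist (i.insertNth a x : Fin (m + 1) → α) (i.insertNth b y) =
      (if a = b then 0 else 1) + hammingDist x y := by
  rw [hammingDist_insertNth, Fin.insertNth_apply_same, Fin.removeNth_insertNth]

theorem two_mul_card_lt_card_of_hammingDist_eq_two {C : Finset (ι → α)} {v : ι → α} (i : ι)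
    (hC : ∀ y ∈ C, ∀ y' ∈ C, y ≠ y' → 4 ≤ hammingDist y y')
    (hv : ∀ y ∈ C, hammingDist v y = 2) (hi : ∀ y ∈ C, y i = v i) :
    2 * C.card < Fintype.card ι := by
  let D : (ι → α) → Finset ι := fun y => {j | v j ≠ y j}
  have hD : ∀ y ∈ C, (D y).card = 2 := hv
  have hdisj : (C : Set (ι → α)).PairwiseDisjoint D := by
    intro y hy y' hy' hne
    have hsub : ({j | y j ≠ y' j} : Finset ι) ⊆ D y ∪ D y' := by
      intro j
      simp only [D, Finset.mem_filter, Finset.mem_univ, true_and, Finset.mem_union]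
      intro hj
      by_contra! hvj
      exact hj (hvj.1.symm.trans hvj.2)
    have hunion := Finset.card_union_add_card_inter (D y) (D y')
    have h4 := (hC y hy y' hy' hne).trans (Finset.card_le_card hsub)
    rw [Function.onFun, Finset.disjoint_iff_inter_eq_empty, ← Finset.card_eq_zero]
    rw [hD y hy, hD y' hy'] at hunion
    omega
  have hcover : C.biUnion D ⊆ Finset.univ.erase i := by
    intro j
    simp only [D, Finset.mem_biUnion, Finset.mem_filter, Finset.mem_univ, true_and,
      Finset.mem_erase, and_true]
    rintro ⟨y, hy, hj⟩ rfl
    exact hj (hi y hy).symm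
  have hcard := Finset.card_le_card hcover
  rw [Finset.card_biUnion hdisj, Finset.sum_congr rfl hD, Finset.sum_const, smul_eq_mul,
    Finset.card_erase_of_mem (Finset.mem_univ i), Finset.card_univ] at hcard
  have := Fintype.card_pos_iff.mpr ⟨i⟩
  omega

end Hamming

theorem Set.ncard_diff_eq_and_le_one {α : Type*} {P M : Set α} (hP : P.Subsingleton)
    (hM : M.Subsingleton) (h : P.Nonempty ↔ M.Nonempty) :
    (P \ M).ncard = (M \ P).ncard ∧ (P \ M).ncard ≤ 1 := by
  rcases hP.eq_empty_or_singleton with rfl | ⟨z, rfl⟩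
  · have hM_empty : M = ∅ :=
      Set.not_nonempty_iff_eq_empty.mp fun hne => Set.not_nonempty_empty (h.mpr hne)
    simp [hM_empty]
  · obtain ⟨z', rfl⟩ := hM.eq_empty_or_singleton.resolve_left
      (h.mp (Set.singleton_nonempty z)).ne_empty
    by_cases hzz : z = z'
    · simp [hzz]
    · rw [sdiff_singleton_eq_self (by simpa using Ne.symm hzz),
        sdiff_singleton_eq_self (by simpa using hzz)]
      simp

section Weight

variable {n q : ℕ} [NeZero q]

theorem wt_eq_ncard_ball_add (T : Set (HV n q)) (v : HV n q) :
    wt T v = (hBall v ∩ T).ncard + 2 / (n : ℚ) * (hSphere v 2 ∩ T).ncard := by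
  have hball : hBall v ∩ T = (hSphere v 0 ∩ T) ∪ (hSphere v 1 ∩ T) := by
    rw [← Set.union_inter_distrib_right]
    congr 1
    ext y
    change _ ≤ 1 ↔ _ = 0 ∨ _ = 1
    omega
  have hdisj : Disjoint (hSphere v 0 ∩ T) (hSphere v 1 ∩ T) :=
    Set.disjoint_left.mpr fun y h0 h1 => by simp_all [hSphere]
  rw [wt, hball, Set.ncard_union_eq hdisj]
  push_cast
  ring

theorem one_le_wt {T : Set (HV n q)} {v y : HV n q} (hy : y ∈ T) (hvy : hammingDist v y ≤ 1) :
    1 ≤ wt T v := by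
  have hball : 1 ≤ (hBall v ∩ T).ncard := (Set.ncard_pos).mpr ⟨y, hvy, hy⟩
  have hsphere : (0 : ℚ) ≤ 2 / (n : ℚ) * (hSphere v 2 ∩ T).ncard := by positivity
  rw [wt_eq_ncard_ball_add]
  have : (1 : ℚ) ≤ (hBall v ∩ T).ncard := by exact_mod_cast hball
  linarith

theorem one_lt_wt {T : Set (HV n q)} {v y y' : HV n q} (hy : y ∈ T) (hy' : y' ∈ T)
    (hne : y ≠ y') (hvy : hammingDist v y ≤ 1) (hvy' : hammingDist v y' ≤ 2) :
    1 < wt T v := by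
  rw [wt_eq_ncard_ball_add]
  rcases (show hammingDist v y' ≤ 1 ∨ hammingDist v y' = 2 by omega) with h1 | h2
  · have hball : 2 ≤ (hBall v ∩ T).ncard :=
      (Set.one_lt_ncard_iff).mpr ⟨y, y', ⟨hvy, hy⟩, ⟨h1, hy'⟩, hne⟩
    have hsphere : (0 : ℚ) ≤ 2 / (n : ℚ) * (hSphere v 2 ∩ T).ncard := by positivity
    have : (2 : ℚ) ≤ (hBall v ∩ T).ncard := by exact_mod_cast hball
    linarith
  · have hn : (2 : ℚ) ≤ n := by
      exact_mod_cast h2 ▸ (hammingDist_le_card_fintype.trans (Fintype.card_fin n).le)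
    have hball : 0 < (hBall v ∩ T).ncard := (Set.ncard_pos).mpr ⟨y, hvy, hy⟩
    have hsphere : 0 < (hSphere v 2 ∩ T).ncard := (Set.ncard_pos).mpr ⟨y', h2, hy'⟩
    have : (1 : ℚ) ≤ (hBall v ∩ T).ncard := by exact_mod_cast hball
    have : (1 : ℚ) ≤ (hSphere v 2 ∩ T).ncard := by exact_mod_cast hsphere
    have : 0 < 2 / (n : ℚ) := by positivity
    nlinarith

theorem minDistGe_four_of_wt_le_one_s8 {T : Set (HV n q)} (hT : ∀ v, wt T v ≤ 1) :
    minDistGe T 4 := by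
  intro y hy y' hy' hne
  by_contra! hlt
  obtain ⟨v, hvy, hvy'⟩ : ∃ v, hammingDist v y ≤ 1 ∧ hammingDist v y' ≤ 2 := by
    by_cases h2 : hammingDist y y' ≤ 2
    · exact ⟨y, by simp, h2⟩
    · obtain ⟨v, h1, h3⟩ := exists_hammingDist_eq_one_and_add_one hne
      exact ⟨v, by rw [hammingDist_comm]; omega, by omega⟩
  exact (hT v).not_gt (one_lt_wt hy hy' hne hvy hvy')

theorem exists_mem_of_one_le_wt {T : Set (HV n q)} (hT : minDistGe T 4) {v : HV n q}
    (hv : 1 ≤ wt T v) (i : Fin n) :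
    ∃ y ∈ T, hammingDist v y ≤ 1 ∨ (hammingDist v y = 2 ∧ y i ≠ v i) := by
  by_contra! hfar
  have hball : hBall v ∩ T = ∅ :=
    Set.eq_empty_iff_forall_notMem.mpr fun y ⟨hvy, hy⟩ => (hfar y hy).1.not_ge hvy
  set C := (Set.toFinite (hSphere v 2 ∩ T)).toFinset
  have hC : 2 * C.card < n := by
    simpa using two_mul_card_lt_card_of_hammingDist_eq_two (C := C) (v := v) i
      (fun y hy y' hy' hne => hT y (by simp_all [C]) y' (by simp_all [C]) hne)
      (fun y hy => by simp_all [C, hSphere]) (fun y hy => by simp_all [C, hSphere])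
  rw [wt_eq_ncard_ball_add, hball, Set.ncard_empty,
    Set.ncard_eq_toFinset_card _ (Set.toFinite _)] at hv
  have hn : (0 : ℚ) < n := by exact_mod_cast i.pos
  have : (2 * C.card + 1 : ℚ) ≤ n := by exact_mod_cast hC
  rw [Nat.cast_zero, zero_add, div_mul_eq_mul_div, le_div_iff₀ hn] at hv
  linarith

end Weight

section Projection

variable {m q : ℕ}

theorem subsingleton_ball_inter_proj {T : Set (HV (m + 1) q)} (hT : minDistGe T 4)
    (i : Fin (m + 1)) (x : HV m q) : (hBall x ∩ proj i T).Subsingleton := by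
  rintro z ⟨hz, a, hza⟩ z' ⟨hz', a', hz'a⟩
  by_contra hne
  have hzz' : hammingDist z z' ≤ 2 :=
    (hammingDist_triangle_left z z' x).trans (by change _ ≤ 1 at hz hz'; omega)
  have h4 := hT _ hza _ hz'a fun h => hne (by simpa using congrArg i.removeNth h)
  rw [hammingDist_insertNth_insertNth] at h4
  split at h4 <;> omega

variable [NeZero q]

theorem nonempty_ball_inter_proj {Tp Tm : Set (HV (m + 1) q)} (hw : ∀ v, wt Tp v = wt Tm v)
    (hTm : minDistGe Tm 4) (i : Fin (m + 1)) (x : HV m q) (h : (hBall x ∩ proj i Tp).Nonempty) :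
    (hBall x ∩ proj i Tm).Nonempty := by
  obtain ⟨z, hz, a, hza⟩ := h
  have hv : 1 ≤ wt Tm (i.insertNth a x) :=
    hw _ ▸ one_le_wt hza (by rw [hammingDist_insertNth_insertNth]; simpa [hBall] using hz)
  obtain ⟨y, hy, hvy⟩ := exists_mem_of_one_le_wt hTm hv i
  refine ⟨i.removeNth y, ?_, y i, by rwa [Fin.insertNth_self_removeNth]⟩
  have hdist := hammingDist_insertNth i a x y
  rw [Fin.insertNth_apply_same] at hvy
  show hammingDist x (i.removeNth y) ≤ 1
  rcases hvy with h1 | ⟨h2, hi⟩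
  · split at hdist <;> omega
  · rw [if_neg (Ne.symm hi)] at hdist
    omega

theorem isPerfectBitrade_proj {Tp Tm : Set (HV (m + 1) q)} (hw : ∀ v, wt Tp v = wt Tm v)
    (hTp : minDistGe Tp 4) (hTm : minDistGe Tm 4) (i : Fin (m + 1)) :
    isPerfectBitrade (proj i Tp \ proj i Tm) (proj i Tm \ proj i Tp) := by
  refine ⟨disjoint_sdiff_sdiff, fun x => ?_⟩
  rw [Set.inter_sdiff_distrib_left, Set.inter_sdiff_distrib_left]
  exact Set.ncard_diff_eq_and_le_one (subsingleton_ball_inter_proj hTp i x)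
    (subsingleton_ball_inter_proj hTm i x)
    ⟨nonempty_ball_inter_proj hw hTm i x, nonempty_ball_inter_proj (fun v => (hw v).symm) hTp i x⟩

end Projection

theorem stmt8_general (q m : ℕ) (hq : 3 ≤ q)
    (Tp Tm : Set (HV (m + 1) q)) (h : weightBitrade Tp Tm) :
    projBitrade Tp Tm := by
  have : NeZero q := ⟨by omega⟩
  obtain ⟨-, hwt⟩ := h
  have hTp : minDistGe Tp 4 := minDistGe_four_of_wt_le_one_s8 fun v => (hwt v).2
  have hTm : minDistGe Tm 4 := minDistGe_four_of_wt_le_one_s8 fun v => (hwt v).1 ▸ (hwt v).2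
  exact ⟨hTp, hTm, fun i => isPerfectBitrade_proj (fun v => (hwt v).1) hTp hTm i⟩

/-- here `n = m + 1 ≥ 2`: the weight definition (Definition 3) implies
the projection definition (Definition 2). -/
theorem stmt8 (q m : ℕ) (hq : 3 ≤ q) (hm : 1 ≤ m)
    (Tp Tm : Set (HV (m + 1) q)) (h : weightBitrade Tp Tm) :
    projBitrade Tp Tm :=
  stmt8_general q m hq Tp Tm h
end

section
/- Let q ≥ 3 and n ≥ 2. If a pair (T⁺, T⁻) of disjoint subsets of V(H(n,q)) satisfies the projection definition of extended perfect bitrade (Definition 2), i.e., T⁺ and T⁻ have code distance at least 4 and every i-projection of (T⁺, T⁻) is a perfect bitrade in H(n−1,q), then it satisfies the weight definition (Definition 3): w_{T⁺}(x) = w_{T⁻}(x) ≤ 1 for every vertex x. -/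
open Finset

/-! Since `T` has code distance at least `4`, deleting coordinate `i` is injective on `T`, so
`|B(xⁱ) ∩ projᵢ T|` counts the `y ∈ T` with `d(xⁱ, yⁱ) ≤ 1`. Such a `y` is counted for every `i`
when `d(x, y) ≤ 1`, for exactly the two coordinates where they differ when `d(x, y) = 2`, and never
otherwise; hence `n · w_T(x) = ∑ᵢ |B(xⁱ) ∩ projᵢ T|`. The `i`-projection being a perfect bitrade
makes the summands for `T⁺` and `T⁻` equal, and each summand is at most `1` because `projᵢ T` has
code distance at least `3`. -/

lemma Set.ncard_inter_eq_of_ncard_inter_sdiff_eq {α : Type*} {S A B : Set α} (hS : S.Finite)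
    (h : (S ∩ (A \ B)).ncard = (S ∩ (B \ A)).ncard) : (S ∩ A).ncard = (S ∩ B).ncard := by
  rw [← Set.ncard_inter_add_ncard_sdiff_eq_ncard (S ∩ A) B (hS.inter_of_left A),
    ← Set.ncard_inter_add_ncard_sdiff_eq_ncard (S ∩ B) A (hS.inter_of_left B),
    Set.inter_sdiff_assoc, Set.inter_sdiff_assoc, h, Set.inter_right_comm]

section HammingDist

variable {m : ℕ} {β : Type*} [DecidableEq β]

lemma hammingDist_eq_hammingDist_removeNth_add (i : Fin (m + 1)) (x y : Fin (m + 1) → β) :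
    hammingDist x y
      = hammingDist (i.removeNth x) (i.removeNth y) + if x i = y i then 0 else 1 := by
  simp only [hammingDist, card_filter]
  rw [Fin.sum_univ_succAbove _ i, add_comm]
  congr 1
  split_ifs <;> simp_all

lemma card_filter_hammingDist_removeNth_le_one (x y : Fin (m + 1) → β) :
    #{i : Fin (m + 1) | hammingDist (i.removeNth x) (i.removeNth y) ≤ 1}
      = if hammingDist x y ≤ 1 then m + 1 else if hammingDist x y = 2 then 2 else 0 := by
  have hd := fun i => hammingDist_eq_hammingDist_removeNth_add i x y
  split_ifs with h1 h2
  · rw [filter_true_of_mem fun i _ => ?_, card_univ, Fintype.card_fin]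
    have := hd i
    omega
  · rw [← h2, hammingDist]
    congr 1
    refine filter_congr fun i _ => ?_
    have := hd i
    split_ifs at this <;> simp_all
  · rw [card_eq_zero, filter_eq_empty_iff]
    intro i _
    have := hd i
    split_ifs at this <;> omega

end HammingDist

section Projection

variable {m n q : ℕ}

lemma proj_eq_image (i : Fin (m + 1)) (T : Set (HV (m + 1) q)) :
    proj i T = i.removeNth '' T := by
  ext u
  constructor
  · rintro ⟨a, ha⟩
    exact ⟨i.insertNth a u, ha, by simp⟩
  · rintro ⟨y, hy, rfl⟩
    exact ⟨y i, by rwa [Fin.insertNth_self_removeNth]⟩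

lemma minDistGe.mono {C : Set (HV n q)} {d e : ℕ} (hC : minDistGe C d) (hed : e ≤ d) :
    minDistGe C e :=
  fun x hx y hy hxy => hed.trans (hC x hx y hy hxy)

lemma minDistGe.proj {T : Set (HV (m + 1) q)} {d : ℕ} (hT : minDistGe T (d + 1))
    (i : Fin (m + 1)) : minDistGe (proj i T) d := by
  rw [proj_eq_image]
  rintro _ ⟨y, hy, rfl⟩ _ ⟨y', hy', rfl⟩ hne
  have := hT y hy y' hy' (by rintro rfl; exact hne rfl)
  have := hammingDist_eq_hammingDist_removeNth_add i y y'
  split_ifs at this <;> omega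

lemma minDistGe.injOn_removeNth {T : Set (HV (m + 1) q)} (hT : minDistGe T 2)
    (i : Fin (m + 1)) : Set.InjOn i.removeNth T := by
  intro y hy y' hy' h
  by_contra hne
  have := hT y hy y' hy' hne
  have := hammingDist_eq_hammingDist_removeNth_add i y y'
  rw [h, hammingDist_self] at this
  split_ifs at this <;> omega

lemma ncard_hBall_inter_le_one {C : Set (HV n q)} (hC : minDistGe C 3) (x : HV n q) :
    (hBall x ∩ C).ncard ≤ 1 := by
  have hsub : (hBall x ∩ C).Subsingleton := by
    rintro y ⟨hy, hyC⟩ y' ⟨hy', hy'C⟩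
    by_contra hne
    have := hC y hyC y' hy'C hne
    have := hammingDist_triangle_left y y' x
    simp only [hBall, Set.mem_ofPred_eq] at hy hy'
    omega
  exact (Set.ncard_le_one hsub.finite).2 hsub

lemma hBall_removeNth_inter_proj (i : Fin (m + 1)) (x : HV (m + 1) q)
    (T : Set (HV (m + 1) q)) :
    hBall (i.removeNth x) ∩ proj i T
      = i.removeNth '' {y ∈ T | hammingDist (i.removeNth x) (i.removeNth y) ≤ 1} := by
  rw [proj_eq_image]
  ext u
  constructor
  · rintro ⟨hu, y, hy, rfl⟩
    exact ⟨y, ⟨hy, hu⟩, rfl⟩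
  · rintro ⟨y, ⟨hy, hu⟩, rfl⟩
    exact ⟨hu, y, hy, rfl⟩

end Projection

section Counting

variable {m q : ℕ} [NeZero q]

lemma sum_ncard_hBall_removeNth_inter_proj {T : Set (HV (m + 1) q)} (hT : minDistGe T 2)
    (x : HV (m + 1) q) :
    ∑ i, (hBall (i.removeNth x) ∩ proj i T).ncard
      = (m + 1) * (hSphere x 0 ∩ T).ncard + (m + 1) * (hSphere x 1 ∩ T).ncard
        + 2 * (hSphere x 2 ∩ T).ncard := by
  classical
  have hball (i : Fin (m + 1)) : (hBall (i.removeNth x) ∩ proj i T).ncard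
      = #{y ∈ T.toFinset | hammingDist (i.removeNth x) (i.removeNth y) ≤ 1} := by
    rw [hBall_removeNth_inter_proj, ((hT.injOn_removeNth i).mono (Set.sep_subset _ _)).ncard_image,
      ← Set.ncard_coe_finset]
    simp
  have hsphere (k : ℕ) : (hSphere x k ∩ T).ncard = #{y ∈ T.toFinset | hammingDist x y = k} := by
    rw [← Set.ncard_coe_finset, coe_filter, Set.inter_comm]
    simp only [Set.mem_toFinset]
    rfl
  simp only [hball, hsphere, card_filter, mul_sum]
  rw [sum_comm, ← sum_add_distrib, ← sum_add_distrib]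
  refine sum_congr rfl fun y _ => ?_
  rw [← card_filter, card_filter_hammingDist_removeNth_le_one]
  split_ifs <;> omega

lemma wt_eq_sum_ncard_hBall_removeNth_inter_proj_div {T : Set (HV (m + 1) q)}
    (hT : minDistGe T 2) (x : HV (m + 1) q) :
    wt T x = (∑ i, (hBall (i.removeNth x) ∩ proj i T).ncard : ℕ) / ((m : ℚ) + 1) := by
  rw [sum_ncard_hBall_removeNth_inter_proj hT, wt, eq_div_iff (by positivity)]
  push_cast
  field_simp

end Counting

theorem stmt9_general (q m : ℕ) (hq : 3 ≤ q)
    (Tp Tm : Set (HV (m + 1) q))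
    (h : projBitrade Tp Tm) :
    ∀ x : HV (m + 1) q, wt Tp x = wt Tm x ∧ wt Tp x ≤ 1 := by
  have : NeZero q := ⟨by omega⟩
  obtain ⟨hTp, hTm, hproj⟩ := h
  intro x
  rw [wt_eq_sum_ncard_hBall_removeNth_inter_proj_div (hTp.mono (by norm_num)) x,
    wt_eq_sum_ncard_hBall_removeNth_inter_proj_div (hTm.mono (by norm_num)) x]
  have hsum_eq : ∑ i, (hBall (i.removeNth x) ∩ proj i Tp).ncard
      = ∑ i, (hBall (i.removeNth x) ∩ proj i Tm).ncard :=
    sum_congr rfl fun i _ =>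
      Set.ncard_inter_eq_of_ncard_inter_sdiff_eq (Set.toFinite _) ((hproj i).2 _).1
  have hsum_le : ∑ i, (hBall (i.removeNth x) ∩ proj i Tp).ncard ≤ m + 1 := by
    simpa using sum_le_card_nsmul univ _ 1 fun i _ => ncard_hBall_inter_le_one (hTp.proj i) _
  exact ⟨by rw [hsum_eq], div_le_one_of_le₀ (by exact_mod_cast hsum_le) (by positivity)⟩

/-- here `n = m + 1 ≥ 2`: the projection definition (Definition 2) implies
the weight definition (Definition 3). -/
theorem stmt9 (q m : ℕ) (hq : 3 ≤ q) (hm : 1 ≤ m)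
    (Tp Tm : Set (HV (m + 1) q)) (hdisj : Disjoint Tp Tm)
    (h : projBitrade Tp Tm) :
    ∀ x : HV (m + 1) q, wt Tp x = wt Tm x ∧ wt Tp x ≤ 1 :=
  stmt9_general q m hq Tp Tm h
end

section
/- Let q ≥ 3 and n ≥ 2. If a pair (T⁺, T⁻) of disjoint subsets of V(H(n,q)) satisfies the weight definition of extended perfect bitrade (Definition 3), then it satisfies the matrix definition (Definition 1): there exists F : V → ℝ³ such that F(x)₀ = χ_{T⁺}(x) − χ_{T⁻}(x) for all x, each F(x) has component sum 0 with at most two nonzero components, and for every vertex x and every j ∈ {0,1,2}, Σ_{y adjacent to x} F(y)_j = Σ_{k∈{0,1,2}} F(x)_k·S_{k,j}, where S is the 3×3 matrix with rows (0, n(q−1), 0), (1, q−2, (n−1)(q−1)), (0, n, n(q−2)). -/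
open Finset

/-!
With `f = χ_{T⁺} - χ_{T⁻}` take `F(x) = (f(x), Σ_{S₁(x)} f, (2/n) Σ_{S₂(x)} f)`. Equality of the
weights of `T⁺` and `T⁻` at `x` says precisely that the entries of `F(x)` sum to zero, and the bound
`w ≤ 1` leaves room for at most two of them to be nonzero. The eigen-equations follow from the
identity `A₁² = n(q-1) A₀ + (q-2) A₁ + 2 A₂` for the distance operators `Aᵢ g(x) = Σ_{S_i(x)} g` of
the Hamming scheme, obtained by counting common neighbours one coordinate at a time; the last
column also uses the row-sum relation at every neighbour of `x`.
-/

section HammingSphere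

variable {ι β : Type*} [Fintype ι] [DecidableEq ι] [DecidableEq β]

lemma hammingDist_update_add (x z : ι → β) (i : ι) (a : β) :
    hammingDist (Function.update x i a) z + (if x i ≠ z i then 1 else 0)
      = hammingDist x z + (if a ≠ z i then 1 else 0) := by
  simp only [hammingDist, card_filter, ← add_sum_erase _ _ (mem_univ i), Function.update_self]
  have : ∑ j ∈ univ.erase i, (if Function.update x i a j ≠ z j then 1 else 0)
      = ∑ j ∈ univ.erase i, (if x j ≠ z j then 1 else 0) :=
    sum_congr rfl fun j hj => by rw [Function.update_of_ne (ne_of_mem_erase hj)]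
  rw [this]
  ring

lemma hammingDist_update_self {x : ι → β} {i : ι} {a : β} (ha : a ≠ x i) :
    hammingDist x (Function.update x i a) = 1 := by
  have := hammingDist_update_add x x i a
  simp only [ne_eq, not_true_eq_false, if_false, hammingDist_self] at this
  rw [hammingDist_comm]
  simpa [ha] using this

variable [Fintype β]

def hammingSphere (x : ι → β) (r : ℕ) : Finset (ι → β) :=
  univ.filter fun y => hammingDist x y = r

@[simp]
lemma mem_hammingSphere {x y : ι → β} {r : ℕ} : y ∈ hammingSphere x r ↔ hammingDist x y = r := by
  simp [hammingSphere]

lemma hammingSphere_zero (x : ι → β) : hammingSphere x 0 = {x} := by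
  ext y
  simp [eq_comm]

lemma sum_hammingSphere_one {M : Type*} [AddCommMonoid M] (x : ι → β) (h : (ι → β) → M) :
    ∑ y ∈ hammingSphere x 1, h y = ∑ i, ∑ a ∈ univ.erase (x i), h (Function.update x i a) := by
  rw [sum_sigma']
  symm
  refine sum_bij (fun p _ => Function.update x p.1 p.2) ?_ ?_ ?_ fun _ _ => rfl
  · rintro ⟨i, a⟩ hp
    simp only [mem_sigma, mem_univ, mem_erase, true_and, and_true] at hp
    exact mem_hammingSphere.2 (hammingDist_update_self hp)
  · rintro ⟨i, a⟩ hp ⟨j, b⟩ - hij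
    simp only [mem_sigma, mem_univ, mem_erase, true_and, and_true] at hp
    obtain rfl : i = j := by
      by_contra hne
      have := congrFun hij i
      rw [Function.update_self, Function.update_of_ne hne] at this
      exact hp this
    simpa using congrFun hij i
  · intro y hy
    obtain ⟨i, hi⟩ := card_eq_one.1 (mem_hammingSphere.1 hy)
    have hdiff : ∀ j, x j ≠ y j ↔ j = i := fun j => by
      simpa using Finset.ext_iff.1 hi j
    refine ⟨⟨i, y i⟩, ?_, ?_⟩
    · simpa using ((hdiff i).2 rfl).symm
    · funext j
      by_cases hj : j = i
      · subst hj; simp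
      · simpa [Function.update_of_ne hj] using mt (hdiff j).1 hj

lemma sum_erase_update_hammingDist_eq_one (x z : ι → β) (i : ι) :
    ∑ a ∈ univ.erase (x i), (if hammingDist (Function.update x i a) z = 1 then (1 : ℝ) else 0)
      = if x i = z i then (if hammingDist x z = 0 then (Fintype.card β : ℝ) - 1 else 0)
        else (if hammingDist x z = 2 then 1 else 0)
          + (if hammingDist x z = 1 then (Fintype.card β : ℝ) - 2 else 0) := by
  by_cases hxz : x i = z i
  · have hupd : ∀ a ∈ univ.erase (x i),
        hammingDist (Function.update x i a) z = hammingDist x z + 1 := fun a ha => by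
      have := hammingDist_update_add x z i a
      rw [← hxz] at this
      simpa [ne_of_mem_erase ha] using this
    rw [sum_congr rfl fun a ha => by rw [hupd a ha], sum_const, nsmul_eq_mul,
      cast_card_erase_of_mem (mem_univ _), card_univ, if_pos hxz]
    split_ifs <;> simp_all
  · have hzi : z i ∈ univ.erase (x i) := mem_erase.2 ⟨Ne.symm hxz, mem_univ _⟩
    have hupd : ∀ a ∈ (univ.erase (x i)).erase (z i),
        hammingDist (Function.update x i a) z = hammingDist x z := fun a ha => by
      have := hammingDist_update_add x z i a
      simpa [hxz, ne_of_mem_erase ha] using this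
    have hupd_z : hammingDist (Function.update x i (z i)) z + 1 = hammingDist x z := by
      simpa [hxz] using hammingDist_update_add x z i (z i)
    rw [← sum_erase_add _ _ hzi, sum_congr rfl fun a ha => by rw [hupd a ha], sum_const,
      nsmul_eq_mul, cast_card_erase_of_mem hzi, cast_card_erase_of_mem (mem_univ _), card_univ,
      if_neg hxz]
    split_ifs <;> first | (exfalso; omega) | ring

lemma sum_hammingSphere_one_hammingDist_eq_one (x z : ι → β) :
    ∑ y ∈ hammingSphere x 1, (if hammingDist y z = 1 then (1 : ℝ) else 0)
      = (if hammingDist x z = 0 then (Fintype.card ι : ℝ) * ((Fintype.card β : ℝ) - 1) else 0)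
        + (if hammingDist x z = 1 then (Fintype.card β : ℝ) - 2 else 0)
        + (if hammingDist x z = 2 then 2 else 0) := by
  rw [sum_hammingSphere_one]
  simp_rw [sum_erase_update_hammingDist_eq_one]
  by_cases hd : hammingDist x z = 0
  · obtain rfl := hammingDist_eq_zero.1 hd
    simp only [hammingDist_self, if_true, sum_const, card_univ, nsmul_eq_mul]
    norm_num
  · simp only [hd, if_false, sum_ite, sum_const_zero, zero_add, sum_const, nsmul_eq_mul]
    change (hammingDist x z : ℝ) * _ = _
    rcases Nat.lt_or_ge (hammingDist x z) 3 with h3 | h3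
    · interval_cases hammingDist x z <;> norm_num
    · simp [show hammingDist x z ≠ 1 by omega, show hammingDist x z ≠ 2 by omega]

lemma sum_ite_hammingDist_mul {M : Type*} [NonUnitalNonAssocSemiring M] (x : ι → β) (r : ℕ) (c : M)
    (g : (ι → β) → M) :
    ∑ z, (if hammingDist x z = r then c else 0) * g z = c * ∑ z ∈ hammingSphere x r, g z := by
  simp [hammingSphere, sum_filter, mul_sum]

lemma sum_hammingSphere_one_sum_hammingSphere_one (g : (ι → β) → ℝ) (x : ι → β) :
    ∑ y ∈ hammingSphere x 1, ∑ z ∈ hammingSphere y 1, g z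
      = (Fintype.card ι : ℝ) * ((Fintype.card β : ℝ) - 1) * g x
        + ((Fintype.card β : ℝ) - 2) * ∑ z ∈ hammingSphere x 1, g z
        + 2 * ∑ z ∈ hammingSphere x 2, g z := by
  calc ∑ y ∈ hammingSphere x 1, ∑ z ∈ hammingSphere y 1, g z
      = ∑ z, (∑ y ∈ hammingSphere x 1, if hammingDist y z = 1 then (1 : ℝ) else 0) * g z := by
        simp only [sum_mul, ite_mul, one_mul, zero_mul]
        rw [sum_comm]
        exact sum_congr rfl fun y _ => sum_filter _ _
    _ = _ := by
        simp only [sum_hammingSphere_one_hammingDist_eq_one, add_mul, sum_add_distrib,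
          sum_ite_hammingDist_mul, hammingSphere_zero, sum_singleton]

end HammingSphere

lemma ncard_setOf_ne_zero_le {m : ℕ} {M : Type*} [Zero M] {v : Fin (m + 1) → M}
    (h : ∃ k, v k = 0) : {k | v k ≠ 0}.ncard ≤ m := by
  obtain ⟨k, hk⟩ := h
  have hne : {k | v k ≠ 0} ≠ Set.univ := fun hu => (hu ▸ Set.mem_univ k : k ∈ {k | v k ≠ 0}) hk
  simpa [Nat.lt_succ_iff] using Set.ncard_lt_card hne

lemma eq_or_eq_or_eq_of_weight_eq {a₀ a₁ a₂ b₀ b₁ b₂ : ℕ} {c : ℚ} (hc : 0 < c)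
    (h : (a₀ : ℚ) + a₁ + c * a₂ = b₀ + b₁ + c * b₂) (hle : (a₀ : ℚ) + a₁ + c * a₂ ≤ 1) :
    a₀ = b₀ ∨ a₁ = b₁ ∨ a₂ = b₂ := by
  by_contra! hne
  have ha : a₀ + a₁ ≤ 1 := by
    have : (0 : ℚ) ≤ c * a₂ := by positivity
    exact_mod_cast (by linarith : (a₀ : ℚ) + a₁ ≤ 1)
  have hb : b₀ + b₁ ≤ 1 := by
    have : (0 : ℚ) ≤ c * b₂ := by positivity
    exact_mod_cast (by linarith : (b₀ : ℚ) + b₁ ≤ 1)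
  -- two distinct pairs of bits with sums at most one are (1, 0) and (0, 1)
  have hsum : a₀ + a₁ = b₀ + b₁ := by omega
  have : c * a₂ = c * b₂ := by
    have : (a₀ : ℚ) + a₁ = b₀ + b₁ := by exact_mod_cast hsum
    linarith
  exact hne.2.2 (by exact_mod_cast mul_left_cancel₀ hc.ne' this)

section Bitrade

variable {n q : ℕ} [NeZero q]

lemma nbrSum_eq_sum_hammingSphere {R : Type*} [AddCommMonoid R] (f : HV n q → R) (x : HV n q) :
    nbrSum f x = ∑ y ∈ hammingSphere x 1, f y := rfl

lemma ncard_hSphere_inter (A : Set (HV n q)) (x : HV n q) (r : ℕ) :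
    ((hSphere x r ∩ A).ncard : ℝ) = ∑ y ∈ hammingSphere x r, chi A y := by
  classical
  have : hSphere x r ∩ A = ↑((hammingSphere x r).filter (· ∈ A)) := by
    ext y
    simp [hSphere]
  rw [this, Set.ncard_coe_finset]
  simp [chi, Set.indicator_apply, sum_boole]

lemma wt_eq_sum_chi (A : Set (HV n q)) (x : HV n q) :
    ((wt A x : ℚ) : ℝ) = chi A x + ∑ y ∈ hammingSphere x 1, chi A y
      + 2 / n * ∑ y ∈ hammingSphere x 2, chi A y := by
  have h0 := ncard_hSphere_inter A x 0
  rw [hammingSphere_zero, sum_singleton] at h0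
  simp [wt, ← ncard_hSphere_inter, h0]

lemma sub_chi_add_sum_eq_zero_of_wt_eq {Tp Tm : Set (HV n q)} {x : HV n q}
    (h : wt Tp x = wt Tm x) :
    (chi Tp - chi Tm) x + ∑ y ∈ hammingSphere x 1, (chi Tp - chi Tm) y
      + 2 / n * ∑ y ∈ hammingSphere x 2, (chi Tp - chi Tm) y = 0 := by
  have hR : ((wt Tp x : ℚ) : ℝ) = ((wt Tm x : ℚ) : ℝ) := congrArg _ h
  rw [wt_eq_sum_chi, wt_eq_sum_chi] at hR
  simp only [Pi.sub_apply, sum_sub_distrib]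
  linear_combination hR

lemma sub_chi_eq_zero_or_of_wt {Tp Tm : Set (HV n q)} {x : HV n q} (hn : n ≠ 0)
    (h : wt Tp x = wt Tm x) (hle : wt Tp x ≤ 1) :
    (chi Tp - chi Tm) x = 0 ∨ ∑ y ∈ hammingSphere x 1, (chi Tp - chi Tm) y = 0
      ∨ ∑ y ∈ hammingSphere x 2, (chi Tp - chi Tm) y = 0 := by
  have hsum : ∀ r, ∑ y ∈ hammingSphere x r, (chi Tp - chi Tm) y
      = ((hSphere x r ∩ Tp).ncard : ℝ) - (hSphere x r ∩ Tm).ncard := fun r => by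
    simp only [Pi.sub_apply, sum_sub_distrib, ncard_hSphere_inter]
  have h0 : (chi Tp - chi Tm) x = ∑ y ∈ hammingSphere x 0, (chi Tp - chi Tm) y := by
    rw [hammingSphere_zero, sum_singleton]
  simp only [h0, hsum, sub_eq_zero, Nat.cast_inj]
  exact eq_or_eq_or_eq_of_weight_eq (by positivity) h hle

lemma nbrSum_eq_sum_mul_Smat (hn : n ≠ 0) (g : HV n q → ℝ)
    (hg : ∀ x, g x + ∑ y ∈ hammingSphere x 1, g y + 2 / n * ∑ y ∈ hammingSphere x 2, g y = 0)
    (x : HV n q) (j : Fin 3) :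
    nbrSum (fun y => ![g y, ∑ z ∈ hammingSphere y 1, g z,
        2 / n * ∑ z ∈ hammingSphere y 2, g z] j) x
      = ∑ k, ![g x, ∑ z ∈ hammingSphere x 1, g z, 2 / n * ∑ z ∈ hammingSphere x 2, g z] k
          * Smat n q k j := by
  have hn' : (n : ℝ) ≠ 0 := Nat.cast_ne_zero.2 hn
  have hsq := sum_hammingSphere_one_sum_hammingSphere_one g x
  simp only [Fintype.card_fin, ZMod.card] at hsq
  -- Summing the row relation over the neighbours of `x` gives `A₁ A₂ g` without computing it,
  -- which would bring in the sphere of radius 3.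
  have hrow_nbrs : ∑ y ∈ hammingSphere x 1, (g y + ∑ z ∈ hammingSphere y 1, g z
      + 2 / n * ∑ z ∈ hammingSphere y 2, g z) = 0 := sum_eq_zero fun y _ => hg y
  rw [sum_add_distrib, sum_add_distrib, ← mul_sum, hsq] at hrow_nbrs
  have hnc : 2 / (n : ℝ) * n = 2 := div_mul_cancel₀ 2 hn'
  rw [nbrSum_eq_sum_hammingSphere]
  fin_cases j <;>
    simp only [Fin.zero_eta, Fin.mk_one, Fin.reduceFinMk, Fin.isValue, Smat, Matrix.of_apply,
      Matrix.cons_val', Matrix.cons_val_fin_one, Matrix.cons_val_zero, Matrix.cons_val_one,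
      Matrix.cons_val, Fin.sum_univ_three]
  · ring
  · rw [hsq]
    linear_combination -(∑ z ∈ hammingSphere x 2, g z) * hnc
  · rw [← mul_sum]
    linear_combination hrow_nbrs - (n : ℝ) * ((q : ℝ) - 1) * hg x + (∑ z ∈ hammingSphere x 2, g z) * hnc

end Bitrade

theorem stmt10_general (q n : ℕ) [NeZero q] (hn : 2 ≤ n)
    (Tp Tm : Set (HV n q)) (h : weightBitrade Tp Tm) :
    matrixBitrade Tp Tm := by
  have hn0 : n ≠ 0 := by omega
  obtain ⟨-, hw⟩ := h
  refine ⟨fun x => ![(chi Tp - chi Tm) x, ∑ y ∈ hammingSphere x 1, (chi Tp - chi Tm) y,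
      2 / n * ∑ y ∈ hammingSphere x 2, (chi Tp - chi Tm) y],
    fun x => rfl, fun x => ?_, fun x => ncard_setOf_ne_zero_le ?_,
    nbrSum_eq_sum_mul_Smat hn0 _ fun x => sub_chi_add_sum_eq_zero_of_wt_eq (hw x).1⟩
  · simpa [Fin.sum_univ_three] using sub_chi_add_sum_eq_zero_of_wt_eq (hw x).1
  · rcases sub_chi_eq_zero_or_of_wt hn0 (hw x).1 (hw x).2 with h0 | h1 | h2
    · exact ⟨0, h0⟩
    · exact ⟨1, h1⟩
    · exact ⟨2, mul_eq_zero_of_right _ h2⟩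

/-- the weight definition (Definition 3) implies
the matrix definition (Definition 1). -/
theorem stmt10 (q n : ℕ) [NeZero q] (hq : 3 ≤ q) (hn : 2 ≤ n)
    (Tp Tm : Set (HV n q)) (h : weightBitrade Tp Tm) :
    matrixBitrade Tp Tm :=
  stmt10_general q n hn Tp Tm h
end

section
/- Let q ≥ 3 and n ≥ 2, and let (T⁺, T⁻) be a pair of disjoint subsets of V(H(n,q)) with T⁺ ∪ T⁻ nonempty that satisfies the weight definition of extended perfect bitrade (Definition 3). Then n is even. -/
open Finset

/-! A vertex `x ∈ T⁺` has weight `1` for `T⁺`, hence also for `T⁻`, while `x ∉ T⁻`. Either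
`T⁻` meets `S₂(x)` and not `S₁(x)`, or some `y ∈ T⁻` is adjacent to `x`, and then moving `x` in a
coordinate where it agrees with `y` gives a neighbour `u` of `x` with `y ∈ S₂(u)`, where again
both weights are `1`. In both cases a weight `c + a + (2/n)·b = 1` with integers `c, a ≥ 0` and
`b ≥ 1` forces `c = a = 0` and `n = 2b`. -/

section HammingDist

variable {ι : Type*} [Fintype ι] {β : ι → Type*} [∀ i, DecidableEq (β i)]

theorem exists_eq_of_hammingDist_lt_card {x y : ∀ i, β i} (h : hammingDist x y < Fintype.card ι) :
    ∃ j, x j = y j := by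
  by_contra! hne
  have hall : univ.filter (fun k => x k ≠ y k) = univ := by simpa using hne
  rw [hammingDist, hall, card_univ] at h
  exact lt_irrefl _ h

variable [DecidableEq ι]

theorem hammingDist_update_of_eq {x y : ∀ i, β i} {j : ι} {v : β j} (hv : v ≠ y j)
    (hxy : x j = y j) : hammingDist (Function.update x j v) y = hammingDist x y + 1 := by
  have hset : univ.filter (fun k => Function.update x j v k ≠ y k) =
      insert j (univ.filter fun k => x k ≠ y k) := by
    ext k
    by_cases hk : k = j
    · subst hk
      simp [hv]
    · simp [hk]
  rw [hammingDist, hset, card_insert_of_notMem (by simp [hxy]), hammingDist]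

end HammingDist

section Weight

variable {n q : ℕ}

theorem hSphere_zero (x : HV n q) : hSphere x 0 = {x} := by
  ext y
  simp [hSphere, eq_comm]

theorem ncard_sphere_zero_add_ncard_sphere_one_le_wt (A : Set (HV n q)) (x : HV n q) :
    ((hSphere x 0 ∩ A).ncard + (hSphere x 1 ∩ A).ncard : ℚ) ≤ wt A x := by
  have : (0 : ℚ) ≤ 2 / (n : ℚ) * (hSphere x 2 ∩ A).ncard := by positivity
  unfold wt
  linarith

theorem one_le_wt_of_mem {A : Set (HV n q)} {x : HV n q} (hx : x ∈ A) : 1 ≤ wt A x := by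
  have h0 : hSphere x 0 ∩ A = {x} := by
    rw [hSphere_zero, Set.singleton_inter_of_mem hx]
  have := ncard_sphere_zero_add_ncard_sphere_one_le_wt A x
  rw [h0, Set.ncard_singleton] at this
  push_cast at this
  linarith

theorem one_le_wt_of_hammingDist_eq_one [NeZero q] {A : Set (HV n q)} {x y : HV n q}
    (hy : y ∈ A) (hxy : hammingDist x y = 1) : 1 ≤ wt A x := by
  have h1 : (1 : ℚ) ≤ (hSphere x 1 ∩ A).ncard := by
    exact_mod_cast (Set.ncard_pos (Set.toFinite (hSphere x 1 ∩ A))).mpr ⟨y, hxy, hy⟩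
  linarith [ncard_sphere_zero_add_ncard_sphere_one_le_wt A x]

theorem even_of_add_add_two_div_mul_eq_one {n c a b : ℕ} (hb : 0 < b)
    (h : (c + a + 2 / n * b : ℚ) = 1) : Even n := by
  rcases n.eq_zero_or_pos with rfl | hn
  · exact .zero
  have hpos : (0 : ℚ) < 2 / n * b := by positivity
  have hca : ((c + a : ℕ) : ℚ) < 1 := by push_cast; linarith
  obtain ⟨rfl, rfl⟩ : c = 0 ∧ a = 0 := by
    have := Nat.cast_lt_one.mp hca
    omega
  have hn2 : (n : ℚ) = 2 * b := by
    push_cast at h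
    field_simp at h
    linarith
  exact ⟨b, by exact_mod_cast hn2.trans (two_mul _)⟩

theorem even_of_wt_eq_one [NeZero q] {A : Set (HV n q)} {x : HV n q} (hwt : wt A x = 1)
    (h2 : (hSphere x 2 ∩ A).Nonempty) : Even n :=
  even_of_add_add_two_div_mul_eq_one (h2.ncard_pos (Set.toFinite _)) hwt

end Weight

namespace weightBitrade

variable {n q : ℕ} {Tp Tm : Set (HV n q)}

theorem symm (h : weightBitrade Tp Tm) : weightBitrade Tm Tp :=
  ⟨h.1.symm, fun x => ⟨(h.2 x).1.symm, (h.2 x).1 ▸ (h.2 x).2⟩⟩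

theorem wt_right_eq_one (h : weightBitrade Tp Tm) {x : HV n q} (hx : 1 ≤ wt Tp x) :
    wt Tm x = 1 :=
  (h.2 x).1 ▸ le_antisymm (h.2 x).2 hx

theorem even_of_mem_left (hq : 1 < q) (hn : 2 ≤ n) (h : weightBitrade Tp Tm) {x : HV n q}
    (hx : x ∈ Tp) : Even n := by
  have : Fact (1 < q) := ⟨hq⟩
  have : NeZero q := ⟨by omega⟩
  have hwx := h.wt_right_eq_one (one_le_wt_of_mem hx)
  rcases (hSphere x 1 ∩ Tm).eq_empty_or_nonempty with h1 | ⟨y, hxy, hy⟩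
  · have h0 : hSphere x 0 ∩ Tm = ∅ := by
      rw [hSphere_zero, Set.singleton_inter_eq_empty]
      exact Set.disjoint_left.mp h.1 hx
    refine even_of_wt_eq_one hwx (Set.nonempty_of_ncard_ne_zero fun h2 => ?_)
    simp [wt, h0, h1, h2] at hwx
  · change hammingDist x y = 1 at hxy
    obtain ⟨j, hj⟩ := exists_eq_of_hammingDist_lt_card (hxy.trans_lt (by rw [Fintype.card_fin]; omega))
    obtain ⟨v, hv⟩ := exists_ne (x j)
    have hux : hammingDist (Function.update x j v) x = 1 := by
      simpa using hammingDist_update_of_eq hv rfl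
    have huy : hammingDist (Function.update x j v) y = 2 := by
      rw [hammingDist_update_of_eq (hj ▸ hv) hj, hxy]
    exact even_of_wt_eq_one (h.wt_right_eq_one (one_le_wt_of_hammingDist_eq_one hx hux))
      ⟨y, huy, hy⟩

end weightBitrade

/-- a nonempty extended perfect bitrade (weight definition) forces `n` even. -/
theorem stmt17 (q n : ℕ) (hq : 3 ≤ q) (hn : 2 ≤ n)
    (Tp Tm : Set (HV n q)) (hne : (Tp ∪ Tm).Nonempty)
    (h : weightBitrade Tp Tm) :
    Even n := by
  obtain ⟨x, hx | hx⟩ := hne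
  · exact h.even_of_mem_left (by omega) hn hx
  · exact h.symm.even_of_mem_left (by omega) hn hx
end
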